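/- For all n ≥ 1: (1) 𝓘ₙ ⊆ 𝔭^{(n)}, and (2) the radical of the ideal 𝓘ₙ + (x₁,x₄) is the maximal graded ideal 𝔪 = (x₁,x₂,x₃,x₄), i.e., 𝓘ₙ + (x₁,x₄) is 𝔪-primary. -/

import Mathlib

open MvPolynomial

noncomputable def curveMap (k : Type*) [Field k] (q m : ℕ) :
    MvPolynomial (Fin 4) k →ₐ[k] MvPolynomial (Fin 2) k :=
  aeval ![X 0 ^ (2*q+1+2*m), X 0 ^ (2*q+1+m) * X 1 ^ m, X 0 ^ (2*q+1) * X 1 ^ (2*m),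
    X 1 ^ (2*q+1+2*m)]

noncomputable def curveIdeal (k : Type*) [Field k] (q m : ℕ) : Ideal (MvPolynomial (Fin 4) k) :=
  RingHom.ker (curveMap k q m)

instance (k : Type*) [Field k] (q m : ℕ) : (curveIdeal k q m).IsPrime :=
  RingHom.ker_isPrime _

noncomputable def symbPow (k : Type*) [Field k] (q m n : ℕ) :
    Ideal (MvPolynomial (Fin 4) k) :=
  (Ideal.map (algebraMap _ (Localization.AtPrime (curveIdeal k q m)))
      ((curveIdeal k q m) ^ n)).comap
    (algebraMap _ (Localization.AtPrime (curveIdeal k q m)))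

noncomputable def fPoly (k : Type*) [Field k] (q m : ℕ) : MvPolynomial (Fin 4) k :=
  - X 2 ^ (2*(q+m)+1) - X 0 ^ (q-1) * X 1 ^ 3 * X 2 ^ (q+m-1) * X 3 ^ m
    + 3 * X 0 ^ q * X 1 * X 2 ^ (q+m) * X 3 ^ m - X 0 ^ (2*q+1) * X 3 ^ (2*m)

noncomputable def moduleLength (R M : Type*) [Ring R] [AddCommGroup M] [Module R M] :
    WithBot ℕ∞ :=
  Order.krullDim (Submodule R M)

/-- `𝓘ₙ = Σ_{n₁+2n₂=n} (f)^{n₂}·𝔭^{n₁}`. -/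
noncomputable def scriptI (k : Type*) [Field k] (q m n : ℕ) :
    Ideal (MvPolynomial (Fin 4) k) :=
  ⨆ (c : ℕ × ℕ) (_ : c.1 + 2 * c.2 = n),
    (Ideal.span {fPoly k q m}) ^ c.2 * (curveIdeal k q m) ^ c.1


/-! `X₀ f` is the determinant `g₁ g₃ - g₂²` of the binomials `gᵢ = curveBinomialᵢ ∈ 𝔭`, so
`X₀ f ∈ 𝔭²`; since `X₀ ∉ 𝔭` becomes a unit in `R_𝔭`, `f ∈ 𝔭⁽²⁾`, and multiplicativity gives
`𝓘ₙ ⊆ 𝔭⁽ⁿ⁾`. Modulo `(X₀, X₃)` the binomials `g₁` and `g₃` reduce to `X₁²` and a power of `X₂`,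
so `𝔪 ⊆ √(𝓘ₙ + (X₀, X₃))`; conversely `𝔭 ⊆ 𝔪` because the curve passes through the origin. -/

theorem Ideal.pow_mem_sup_of_sub_mem {R : Type*} [CommRing R] {I J : Ideal R} {x y : R}
    {n : ℕ} (hy : y ^ n ∈ I) (hxy : x - y ∈ J) : x ^ n ∈ I ⊔ J := by
  rw [← add_sub_cancel (y ^ n) (x ^ n)]
  exact Ideal.add_mem _ (Ideal.mem_sup_left hy)
    (Ideal.mem_sup_right (J.mem_of_dvd (sub_dvd_pow_sub_pow x y n) hxy))

theorem IsLocalization.algebraMap_mem_map_of_mul_mem {R : Type*} [CommRing R]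
    {M : Submonoid R} (S : Type*) [CommRing S] [Algebra R S] [IsLocalization M S]
    {I : Ideal R} {s f : R} (hs : s ∈ M) (h : s * f ∈ I) :
    algebraMap R S f ∈ I.map (algebraMap R S) := by
  rw [← Ideal.unit_mul_mem_iff_mem _ (map_units S ⟨s, hs⟩), ← map_mul]
  exact Ideal.mem_map_of_mem _ h

namespace MvPolynomial

theorem idealOfVars_eq_ker_constantCoeff (σ R : Type*) [CommSemiring R] :
    idealOfVars σ R = RingHom.ker (constantCoeff (σ := σ) (R := R)) := by
  ext p
  rw [← pow_one (idealOfVars σ R), mem_pow_idealOfVars_iff', RingHom.mem_ker,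
    constantCoeff_eq]
  simp [Finsupp.degree_eq_zero_iff]

theorem isPrime_idealOfVars (σ R : Type*) [CommRing R] [IsDomain R] :
    (idealOfVars σ R).IsPrime := by
  rw [idealOfVars_eq_ker_constantCoeff]
  exact RingHom.ker_isPrime _

end MvPolynomial

section MonomialCurve

variable {k : Type*} [Field k] {q m : ℕ}

theorem mem_curveIdeal_iff {g : MvPolynomial (Fin 4) k} :
    g ∈ curveIdeal k q m ↔ curveMap k q m g = 0 :=
  RingHom.mem_ker

theorem X_zero_notMem_curveIdeal : (X 0 : MvPolynomial (Fin 4) k) ∉ curveIdeal k q m := by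
  simp [mem_curveIdeal_iff, curveMap]

theorem constantCoeff_curveMap (g : MvPolynomial (Fin 4) k) :
    constantCoeff (curveMap k q m g) = constantCoeff g := by
  have h : constantCoeff.comp (curveMap k q m).toRingHom = constantCoeff := by
    refine ringHom_ext (fun a => by simp) (fun i => ?_)
    fin_cases i <;> simp [curveMap]
  exact congr($h g)

theorem curveIdeal_le_idealOfVars : curveIdeal k q m ≤ idealOfVars (Fin 4) k := by
  intro g hg
  rw [idealOfVars_eq_ker_constantCoeff, RingHom.mem_ker, ← constantCoeff_curveMap,
    mem_curveIdeal_iff.mp hg, map_zero]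

noncomputable def curveBinomial₁ (k : Type*) [Field k] : MvPolynomial (Fin 4) k :=
  X 1 ^ 2 - X 0 * X 2

noncomputable def curveBinomial₂ (k : Type*) [Field k] (q m : ℕ) : MvPolynomial (Fin 4) k :=
  X 1 * X 2 ^ (q + m) - X 0 ^ (q + 1) * X 3 ^ m

noncomputable def curveBinomial₃ (k : Type*) [Field k] (q m : ℕ) : MvPolynomial (Fin 4) k :=
  X 2 ^ (2 * (q + m)) - X 0 ^ q * X 1 * X 2 ^ (q + m - 1) * X 3 ^ m

theorem curveBinomial₁_mem_curveIdeal : curveBinomial₁ k ∈ curveIdeal k q m := by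
  simp [mem_curveIdeal_iff, curveBinomial₁, curveMap]
  ring

theorem curveBinomial₂_mem_curveIdeal : curveBinomial₂ k q m ∈ curveIdeal k q m := by
  simp [mem_curveIdeal_iff, curveBinomial₂, curveMap]
  ring

theorem curveBinomial₃_mem_curveIdeal (hq : 1 ≤ q) :
    curveBinomial₃ k q m ∈ curveIdeal k q m := by
  obtain ⟨p, rfl⟩ := Nat.exists_eq_add_of_le' hq
  simp [mem_curveIdeal_iff, curveBinomial₃, curveMap, show p + 1 + m - 1 = p + m by omega]
  ring

theorem X_zero_mul_fPoly (hq : 1 ≤ q) :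
    X 0 * fPoly k q m = curveBinomial₁ k * curveBinomial₃ k q m - curveBinomial₂ k q m ^ 2 := by
  obtain ⟨p, rfl⟩ := Nat.exists_eq_add_of_le' hq
  simp only [fPoly, curveBinomial₁, curveBinomial₂, curveBinomial₃,
    show p + 1 - 1 = p by omega, show p + 1 + m - 1 = p + m by omega]
  ring

theorem X_zero_mul_fPoly_mem_curveIdeal_sq (hq : 1 ≤ q) :
    X 0 * fPoly k q m ∈ curveIdeal k q m ^ 2 := by
  rw [X_zero_mul_fPoly hq, sq, sq]
  exact sub_mem
    (Ideal.mul_mem_mul curveBinomial₁_mem_curveIdeal (curveBinomial₃_mem_curveIdeal hq))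
    (Ideal.mul_mem_mul curveBinomial₂_mem_curveIdeal curveBinomial₂_mem_curveIdeal)

theorem fPoly_mem_curveIdeal (hq : 1 ≤ q) : fPoly k q m ∈ curveIdeal k q m :=
  (Ideal.IsPrime.mem_or_mem inferInstance
    (Ideal.pow_le_self two_ne_zero (X_zero_mul_fPoly_mem_curveIdeal_sq hq))).resolve_left
    X_zero_notMem_curveIdeal

theorem map_span_fPoly_le_map_curveIdeal_sq (hq : 1 ≤ q) :
    (Ideal.span {fPoly k q m}).map (algebraMap _ (Localization.AtPrime (curveIdeal k q m))) ≤
      (curveIdeal k q m).map (algebraMap _ _) ^ 2 := by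
  rw [Ideal.map_span, Set.image_singleton, Ideal.span_singleton_le_iff_mem, ← Ideal.map_pow]
  exact IsLocalization.algebraMap_mem_map_of_mul_mem _
    (show X 0 ∈ (curveIdeal k q m).primeCompl from X_zero_notMem_curveIdeal)
    (X_zero_mul_fPoly_mem_curveIdeal_sq hq)

theorem scriptI_le_iff {J : Ideal (MvPolynomial (Fin 4) k)} {n : ℕ} :
    scriptI k q m n ≤ J ↔
      ∀ a b : ℕ, a + 2 * b = n → Ideal.span {fPoly k q m} ^ b * curveIdeal k q m ^ a ≤ J := by
  simp [scriptI, Prod.forall]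

theorem curveIdeal_pow_le_scriptI (n : ℕ) : curveIdeal k q m ^ n ≤ scriptI k q m n := by
  unfold scriptI
  exact le_iSup₂_of_le (n, 0) (by simp) (by simp)

theorem scriptI_le_curveIdeal (hq : 1 ≤ q) {n : ℕ} (hn : 1 ≤ n) :
    scriptI k q m n ≤ curveIdeal k q m := by
  refine scriptI_le_iff.mpr fun a b hab => ?_
  rcases Nat.eq_zero_or_pos a with rfl | ha
  · refine Ideal.mul_le_left.trans ((Ideal.pow_le_self (by omega)).trans ?_)
    exact (Ideal.span_singleton_le_iff_mem _).mpr (fPoly_mem_curveIdeal hq)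
  · exact Ideal.mul_le_right.trans (Ideal.pow_le_self ha.ne')

theorem scriptI_le_symbPow (hq : 1 ≤ q) (n : ℕ) : scriptI k q m n ≤ symbPow k q m n := by
  refine scriptI_le_iff.mpr fun a b hab => ?_
  rw [symbPow, ← Ideal.map_le_iff_le_comap, Ideal.map_mul, Ideal.map_pow, Ideal.map_pow,
    Ideal.map_pow, ← hab, pow_add, mul_comm, pow_mul]
  gcongr
  exact map_span_fPoly_le_map_curveIdeal_sq hq

theorem X_one_mem_radical_scriptI_sup (n : ℕ) :
    X 1 ∈ (scriptI k q m n ⊔ Ideal.span {X 0, X 3}).radical := by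
  refine ⟨2 * n, ?_⟩
  rw [pow_mul]
  refine Ideal.pow_mem_sup_of_sub_mem (y := curveBinomial₁ k)
    (curveIdeal_pow_le_scriptI n (Ideal.pow_mem_pow curveBinomial₁_mem_curveIdeal n)) ?_
  rw [curveBinomial₁, sub_sub_cancel]
  exact Ideal.mul_mem_right _ _ (Ideal.subset_span (by simp))

theorem X_two_mem_radical_scriptI_sup (hq : 1 ≤ q) (n : ℕ) :
    X 2 ∈ (scriptI k q m n ⊔ Ideal.span {X 0, X 3}).radical := by
  refine ⟨2 * (q + m) * n, ?_⟩
  rw [pow_mul]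
  refine Ideal.pow_mem_sup_of_sub_mem (y := curveBinomial₃ k q m)
    (curveIdeal_pow_le_scriptI n (Ideal.pow_mem_pow (curveBinomial₃_mem_curveIdeal hq) n)) ?_
  rw [curveBinomial₃, sub_sub_cancel, mul_assoc, mul_assoc]
  exact Ideal.mul_mem_right _ _ (Ideal.pow_mem_of_mem _ (Ideal.subset_span (by simp)) q hq)

end MonomialCurve

theorem statement8_general (k : Type*) [Field k] (q m : ℕ) (hq : 1 ≤ q) :
    ∀ n : ℕ, 1 ≤ n →
      scriptI k q m n ≤ symbPow k q m n ∧
      (scriptI k q m n ⊔ Ideal.span {(X 0 : MvPolynomial (Fin 4) k), X 3}).radical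
        = Ideal.span {(X 0 : MvPolynomial (Fin 4) k), X 1, X 2, X 3} := by
  intro n hn
  refine ⟨scriptI_le_symbPow hq n, le_antisymm ?_ ?_⟩
  · have hvars : Ideal.span {X 0, X 1, X 2, X 3} = idealOfVars (Fin 4) k := by
      congr 1
      ext
      simp [Fin.exists_fin_succ, eq_comm]
    rw [hvars, (isPrime_idealOfVars _ _).radical_le_iff]
    refine sup_le ((scriptI_le_curveIdeal hq hn).trans curveIdeal_le_idealOfVars) ?_
    rw [Ideal.span_le]
    rintro _ (rfl | rfl) <;> exact Ideal.subset_span ⟨_, rfl⟩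
  · rw [Ideal.span_le]
    rintro _ (rfl | rfl | rfl | rfl)
    · exact Ideal.le_radical (Ideal.mem_sup_right (Ideal.subset_span (by simp)))
    · exact X_one_mem_radical_scriptI_sup n
    · exact X_two_mem_radical_scriptI_sup hq n
    · exact Ideal.le_radical (Ideal.mem_sup_right (Ideal.subset_span (by simp)))

/-- For all `n ≥ 1`: (1) `𝓘ₙ ⊆ 𝔭⁽ⁿ⁾`, and (2) the radical of
`𝓘ₙ + (x₁,x₄)` is the maximal graded ideal `𝔪 = (x₁,x₂,x₃,x₄)`, i.e. `𝓘ₙ + (x₁,x₄)` is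
`𝔪`-primary. -/
theorem statement8 (k : Type*) [Field k] (q m : ℕ) (hq : 1 ≤ q) (hm : 1 ≤ m)
    (hco : Nat.Coprime (2*q+1) m) :
    ∀ n : ℕ, 1 ≤ n →
      scriptI k q m n ≤ symbPow k q m n ∧
      (scriptI k q m n ⊔ Ideal.span {(X 0 : MvPolynomial (Fin 4) k), X 3}).radical
        = Ideal.span {(X 0 : MvPolynomial (Fin 4) k), X 1, X 2, X 3} :=
  statement8_general k q m hq
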